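/- If the upper-bound rank satisfies r↑(u) ≤ c · R↓_k, where R↓_k is the k-th smallest lower-bound rank, then r(q,u,P) ≤ c · r(q,u_k,P) where u_k is the user with the k-th smallest true rank. In other words, u is a valid member of a c-approximate reverse k-ranks answer. -/

import Mathlib

/-!
The k-th order statistic of a multiset of reals is monotone under pointwise increase: `kth s k ≤ x`
holds exactly when at least `k` elements of `s` are `≤ x`, and raising the elements can only lower
that count. Applied to `rlo ≤ rnk`, this gives `R↓_k ≤ r(q, u_k)`, and then
`r(q, u) ≤ r↑(u) ≤ c R↓_k ≤ c r(q, u_k)`.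
-/

open Finset

/-- Standard inner (dot) product on ℝ^d. -/
def dot {d : ℕ} (u v : Fin d → ℝ) : ℝ := ∑ i, u i * v i

/-- Rank of q for user u among item set P. -/
noncomputable def rnk {d : ℕ} (q u : Fin d → ℝ) (P : Finset (Fin d → ℝ)) : ℕ :=
  1 + (P.filter (fun p => dot u q < dot u p)).card

/-- k-th smallest element of a multiset of reals (1-indexed). -/
noncomputable def kth (s : Multiset ℝ) (k : ℕ) : ℝ :=
  ((s.sort (· ≤ ·)).getD (k - 1) 0)

theorem List.SortedLE.getElem_le_iff_lt_countP {α : Type*} [LinearOrder α] {l : List α}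
    (hl : l.SortedLE) {i : ℕ} (hi : i < l.length) (x : α) :
    l[i] ≤ x ↔ i < l.countP (· ≤ x) := by
  constructor
  · intro hx
    have hprefix : (l.take (i + 1)).countP (· ≤ x) = i + 1 := by
      rw [List.countP_eq_length.2, List.length_take_of_le hi]
      intro a ha
      obtain ⟨j, hj, rfl⟩ := List.mem_take_iff_getElem.1 ha
      simpa using (hl.getElem_le_getElem_of_le (by omega)).trans hx
    rw [Nat.lt_iff_add_one_le, ← hprefix]
    exact (List.take_sublist _ _).countP_le
  · contrapose!
    intro hx
    have hsuffix : (l.drop i).countP (· ≤ x) = 0 := by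
      rw [List.countP_eq_zero]
      intro a ha
      obtain ⟨j, hj, rfl⟩ := List.mem_drop_iff_getElem.1 ha
      simpa using hx.trans_le (hl.getElem_le_getElem_of_le (by omega))
    calc l.countP (· ≤ x)
        = (l.take i).countP (· ≤ x) + (l.drop i).countP (· ≤ x) := by
          rw [← List.countP_append, List.take_append_drop]
      _ ≤ i := by
          rw [hsuffix, Nat.add_zero]
          exact List.countP_le_length.trans (List.length_take_le _ _)

theorem kth_le_iff_le_countP {s : Multiset ℝ} {k : ℕ} (hk1 : 1 ≤ k) (hk2 : k ≤ Multiset.card s)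
    (x : ℝ) : kth s k ≤ x ↔ k ≤ s.countP (· ≤ x) := by
  have hlen : k - 1 < (s.sort (· ≤ ·)).length := by rw [Multiset.length_sort]; omega
  conv_rhs => rw [← Multiset.sort_eq s (· ≤ ·), Multiset.coe_countP]
  rw [kth, List.getD_eq_getElem _ _ hlen,
    (Multiset.pairwise_sort _ _).sortedLE.getElem_le_iff_lt_countP hlen]
  omega

theorem countP_map_le_countP_map {α : Type*} {s : Multiset α} {f g : α → ℝ}
    (hfg : ∀ a ∈ s, f a ≤ g a) (x : ℝ) :
    (s.map g).countP (· ≤ x) ≤ (s.map f).countP (· ≤ x) := by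
  obtain ⟨l, rfl⟩ : ∃ l : List α, (l : Multiset α) = s := Quot.exists_rep s
  simp only [Multiset.map_coe, Multiset.coe_countP, List.countP_map]
  exact List.countP_mono_left fun a ha h => by simpa using (hfg a ha).trans (by simpa using h)

theorem kth_map_mono {α : Type*} {s : Multiset α} {f g : α → ℝ} (hfg : ∀ a ∈ s, f a ≤ g a)
    {k : ℕ} (hk1 : 1 ≤ k) (hk2 : k ≤ Multiset.card s) :
    kth (s.map f) k ≤ kth (s.map g) k := by
  have hcard (h : α → ℝ) : k ≤ Multiset.card (s.map h) := (Multiset.card_map h s).symm ▸ hk2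
  rw [kth_le_iff_le_countP hk1 (hcard f)]
  exact ((kth_le_iff_le_countP hk1 (hcard g) _).1 le_rfl).trans (countP_map_le_countP_map hfg _)

theorem stmt1_general {d : ℕ} (U P : Finset (Fin d → ℝ)) (q : Fin d → ℝ)
    (k : ℕ) (hk1 : 1 ≤ k) (hk2 : k ≤ U.card)
    (c : ℝ) (hc : 1 ≤ c)
    (rlo rhi : (Fin d → ℝ) → ℝ)
    (hb : ∀ u ∈ U, rlo u ≤ (rnk q u P : ℝ) ∧ (rnk q u P : ℝ) ≤ rhi u)
    (uk : Fin d → ℝ)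
    (hukk : (rnk q uk P : ℝ) = kth (U.val.map (fun u => (rnk q u P : ℝ))) k)
    (u : Fin d → ℝ) (hu : u ∈ U)
    (hcond : rhi u ≤ c * kth (U.val.map rlo) k) :
    (rnk q u P : ℝ) ≤ c * (rnk q uk P : ℝ) := by
  have hkth : kth (U.val.map rlo) k ≤ kth (U.val.map fun u => (rnk q u P : ℝ)) k :=
    kth_map_mono (fun a ha => (hb a ha).1) hk1 hk2
  calc (rnk q u P : ℝ) ≤ rhi u := (hb u hu).2
    _ ≤ c * kth (U.val.map rlo) k := hcond
    _ ≤ c * kth (U.val.map fun u => (rnk q u P : ℝ)) k :=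
        mul_le_mul_of_nonneg_left hkth (zero_le_one.trans hc)
    _ = c * (rnk q uk P : ℝ) := by rw [hukk]

theorem stmt1 {d : ℕ} (U P : Finset (Fin d → ℝ)) (q : Fin d → ℝ)
    (k : ℕ) (hk1 : 1 ≤ k) (hk2 : k ≤ U.card)
    (c : ℝ) (hc : 1 ≤ c)
    (rlo rhi : (Fin d → ℝ) → ℝ)
    (hb : ∀ u ∈ U, rlo u ≤ (rnk q u P : ℝ) ∧ (rnk q u P : ℝ) ≤ rhi u)
    (uk : Fin d → ℝ) (huk : uk ∈ U)
    (hukk : (rnk q uk P : ℝ) = kth (U.val.map (fun u => (rnk q u P : ℝ))) k)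
    (u : Fin d → ℝ) (hu : u ∈ U)
    (hcond : rhi u ≤ c * kth (U.val.map rlo) k) :
    (rnk q u P : ℝ) ≤ c * (rnk q uk P : ℝ) :=
  stmt1_general U P q k hk1 hk2 c hc rlo rhi hb uk hukk u hu hcond
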